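/- For any positive weights p₁,…,pₙ summing to 1 and any real numbers x₁,…,xₙ not all equal, min{xᵢ} ≤ (∑ pᵢ xᵢ³ - (∑ pᵢ xᵢ)³) / (3(∑ pᵢ xᵢ² - (∑ pᵢ xᵢ)²)) ≤ max{xᵢ}. -/

import Mathlib

/-!
Centre the data at the mean `μ = ∑ pᵢ xᵢ`. With `A = ∑ pᵢ (xᵢ - μ)²` and `B = ∑ pᵢ (xᵢ - μ)³`
the quotient equals `μ + B / (3A)`, and `(xᵢ - μ)³ = (xᵢ - μ) (xᵢ - μ)²` gives
`(min - μ) A ≤ B ≤ (max - μ) A`. Hence the quotient lies between `μ + (min - μ)/3` and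
`μ + (max - μ)/3`, which in turn lie between `min` and `max` because `min ≤ μ ≤ max`.
-/

open Finset

namespace Finset

variable {ι : Type*} (s : Finset ι) (w f : ι → ℝ)

theorem sum_mul_sq_sub_sq_eq_sum_mul_sub_sq (hw : ∑ i ∈ s, w i = 1) :
    ∑ i ∈ s, w i * f i ^ 2 - (∑ i ∈ s, w i * f i) ^ 2 =
      ∑ i ∈ s, w i * (f i - ∑ j ∈ s, w j * f j) ^ 2 := by
  set μ := ∑ j ∈ s, w j * f j
  have expand : ∀ i, w i * (f i - μ) ^ 2 = w i * f i ^ 2 - 2 * μ * (w i * f i) + μ ^ 2 * w i :=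
    fun i => by ring
  simp only [expand, sum_add_distrib, sum_sub_distrib, ← mul_sum, hw]
  ring

theorem sum_mul_cube_sub_cube_eq_sum_mul_sub_cube (hw : ∑ i ∈ s, w i = 1) :
    ∑ i ∈ s, w i * f i ^ 3 - (∑ i ∈ s, w i * f i) ^ 3 =
      ∑ i ∈ s, w i * (f i - ∑ j ∈ s, w j * f j) ^ 3 +
        3 * (∑ i ∈ s, w i * f i) * ∑ i ∈ s, w i * (f i - ∑ j ∈ s, w j * f j) ^ 2 := by
  set μ := ∑ j ∈ s, w j * f j
  have expand₃ : ∀ i, w i * (f i - μ) ^ 3 =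
      w i * f i ^ 3 - 3 * μ * (w i * f i ^ 2) + 3 * μ ^ 2 * (w i * f i) - μ ^ 3 * w i :=
    fun i => by ring
  have expand₂ : ∀ i, w i * (f i - μ) ^ 2 = w i * f i ^ 2 - 2 * μ * (w i * f i) + μ ^ 2 * w i :=
    fun i => by ring
  simp only [expand₃, expand₂, sum_add_distrib, sum_sub_distrib, ← mul_sum, hw]
  ring

theorem sum_mul_le_of_le (hw : ∀ i ∈ s, 0 ≤ w i) (hw1 : ∑ i ∈ s, w i = 1) {M : ℝ}
    (hM : ∀ i ∈ s, f i ≤ M) : ∑ i ∈ s, w i * f i ≤ M :=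
  calc ∑ i ∈ s, w i * f i ≤ ∑ i ∈ s, w i * M :=
        sum_le_sum fun i hi => mul_le_mul_of_nonneg_left (hM i hi) (hw i hi)
    _ = M := by rw [← sum_mul, hw1, one_mul]

theorem le_sum_mul_of_le (hw : ∀ i ∈ s, 0 ≤ w i) (hw1 : ∑ i ∈ s, w i = 1) {m : ℝ}
    (hm : ∀ i ∈ s, m ≤ f i) : m ≤ ∑ i ∈ s, w i * f i := by
  have := sum_mul_le_of_le s w (-f) hw hw1 fun i hi => neg_le_neg (hm i hi)
  simpa [sum_neg_distrib] using this

theorem sum_mul_sub_cube_le (hw : ∀ i ∈ s, 0 ≤ w i) {M : ℝ} (hM : ∀ i ∈ s, f i ≤ M) (c : ℝ) :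
    ∑ i ∈ s, w i * (f i - c) ^ 3 ≤ (M - c) * ∑ i ∈ s, w i * (f i - c) ^ 2 := by
  rw [mul_sum]
  refine sum_le_sum fun i hi => ?_
  have : (f i - c) * (f i - c) ^ 2 ≤ (M - c) * (f i - c) ^ 2 :=
    mul_le_mul_of_nonneg_right (by linarith [hM i hi]) (sq_nonneg _)
  nlinarith [hw i hi]

theorem le_sum_mul_sub_cube (hw : ∀ i ∈ s, 0 ≤ w i) {m : ℝ} (hm : ∀ i ∈ s, m ≤ f i) (c : ℝ) :
    (m - c) * ∑ i ∈ s, w i * (f i - c) ^ 2 ≤ ∑ i ∈ s, w i * (f i - c) ^ 3 := by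
  rw [mul_sum]
  refine sum_le_sum fun i hi => ?_
  have : (m - c) * (f i - c) ^ 2 ≤ (f i - c) * (f i - c) ^ 2 :=
    mul_le_mul_of_nonneg_right (by linarith [hm i hi]) (sq_nonneg _)
  nlinarith [hw i hi]

theorem sum_mul_sub_sq_pos (hw : ∀ i ∈ s, 0 < w i) {c : ℝ} (hc : ∃ i ∈ s, f i ≠ c) :
    0 < ∑ i ∈ s, w i * (f i - c) ^ 2 := by
  obtain ⟨k, hk, hfk⟩ := hc
  refine sum_pos' (fun i hi => mul_nonneg (hw i hi).le (sq_nonneg _)) ⟨k, hk, ?_⟩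
  have := sub_ne_zero.mpr hfk
  exact mul_pos (hw k hk) (by positivity)

end Finset

theorem Finset.sum_mul_cube_sub_cube_div_mem_Icc {ι : Type*} (s : Finset ι) (w f : ι → ℝ)
    (hw : ∀ i ∈ s, 0 < w i) (hw1 : ∑ i ∈ s, w i = 1) {m M : ℝ} (hm : ∀ i ∈ s, m ≤ f i)
    (hM : ∀ i ∈ s, f i ≤ M) (hne : ∃ i ∈ s, f i ≠ ∑ j ∈ s, w j * f j) :
    (∑ i ∈ s, w i * f i ^ 3 - (∑ i ∈ s, w i * f i) ^ 3) /
        (3 * (∑ i ∈ s, w i * f i ^ 2 - (∑ i ∈ s, w i * f i) ^ 2)) ∈ Set.Icc m M := by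
  have hw₀ : ∀ i ∈ s, 0 ≤ w i := fun i hi => (hw i hi).le
  rw [sum_mul_sq_sub_sq_eq_sum_mul_sub_sq s w f hw1,
    sum_mul_cube_sub_cube_eq_sum_mul_sub_cube s w f hw1]
  set μ := ∑ j ∈ s, w j * f j
  have hA := sum_mul_sub_sq_pos s w f hw hne
  have hBm := le_sum_mul_sub_cube s w f hw₀ hm μ
  have hBM := sum_mul_sub_cube_le s w f hw₀ hM μ
  have hmμ := le_sum_mul_of_le s w f hw₀ hw1 hm
  have hμM := sum_mul_le_of_le s w f hw₀ hw1 hM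
  have h3A : 0 < 3 * ∑ i ∈ s, w i * (f i - μ) ^ 2 := by positivity
  constructor
  · rw [le_div_iff₀ h3A]
    nlinarith [mul_nonneg (sub_nonneg.mpr hmμ) hA.le]
  · rw [div_le_iff₀ h3A]
    nlinarith [mul_nonneg (sub_nonneg.mpr hμM) hA.le]

theorem stmt4 (n : ℕ) (p x : Fin n → ℝ) (hp : ∀ i, 0 < p i) (hp1 : ∑ i, p i = 1)
    (hne : ¬ ∀ i j, x i = x j) :
    sInf (Set.range x) ≤
      (∑ i, p i * (x i) ^ 3 - (∑ i, p i * x i) ^ 3) /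
        (3 * (∑ i, p i * (x i) ^ 2 - (∑ i, p i * x i) ^ 2)) ∧
    (∑ i, p i * (x i) ^ 3 - (∑ i, p i * x i) ^ 3) /
        (3 * (∑ i, p i * (x i) ^ 2 - (∑ i, p i * x i) ^ 2)) ≤ sSup (Set.range x) := by
  have hx_ne_mean : ∃ i ∈ univ, x i ≠ ∑ j, p j * x j := by
    by_contra! h
    exact hne fun i j => (h i (mem_univ i)).trans (h j (mem_univ j)).symm
  exact sum_mul_cube_sub_cube_div_mem_Icc univ p x (fun i _ => hp i) hp1
    (fun i _ => ciInf_le (Finite.bddBelow_range x) i)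
    (fun i _ => le_ciSup (Finite.bddAbove_range x) i) hx_ne_mean
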